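/- Let k ≠ 0 be a real constant and W a one-dimensional Brownian motion. The FBSDE dX_t = (k + Z_t) dW_t, X_0 = x, dY_t = Z_t dW_t, Y_T = X_T, admits no solution (X,Y,Z) of adapted square-integrable processes: any solution would satisfy Y_t = X_t + k(W_T − W_t) for all t, in particular Y_0 − x = k W_T, which contradicts the 𝓕_0-measurability of Y_0 since W_T is a nondegenerate Gaussian random variable. -/

import Mathlib

open MeasureTheory ProbabilityTheory Filter Set
open scoped ENNReal NNReal

noncomputable section

/-- Vectors in `ℝ^k`. -/
abbrev Vec (k : ℕ) := Fin k → ℝ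
/-- `m × k` real matrices. -/
abbrev Mat (m k : ℕ) := Fin m → Fin k → ℝ
/-- Paths with values in `ℝ^d`. -/
abbrev PathD (d : ℕ) := ℝ → Vec d

/-- Euclidean inner product. -/
def vdot {k : ℕ} (v w : Vec k) : ℝ := ∑ i, v i * w i
/-- Euclidean norm. -/
def vnorm {k : ℕ} (v : Vec k) : ℝ := Real.sqrt (vdot v v)
/-- Frobenius inner product of matrices. -/
def mdot {m k : ℕ} (A B : Mat m k) : ℝ := ∑ i, ∑ j, A i j * B i j
/-- Frobenius norm of a matrix. -/
def mnorm {m k : ℕ} (A : Mat m k) : ℝ := Real.sqrt (mdot A A)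
/-- Matrix-vector multiplication. -/
def mvMul {m k : ℕ} (A : Mat m k) (v : Vec k) : Vec m := fun i => ∑ j, A i j * v j
/-- Matrix-matrix multiplication. -/
def matMul {m k l : ℕ} (A : Mat m k) (B : Mat k l) : Mat m l := fun i j => ∑ p, A i p * B p j
/-- Transpose. -/
def transp {m k : ℕ} (A : Mat m k) : Mat k m := fun i j => A j i

/-- The squared path norm `‖x‖_{2,t}² = ∫₀ᵗ |x(s)|² ds + |x(t)|²`. -/
def pathNormSq {d : ℕ} (x : PathD d) (t : ℝ) : ℝ :=
  (∫ s in Set.Ioc (0:ℝ) t, (vnorm (x s))^2) + (vnorm (x t))^2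

/-- The path norm `‖x‖_{2,t}`. -/
def pathNorm {d : ℕ} (x : PathD d) (t : ℝ) : ℝ := Real.sqrt (pathNormSq x t)

/-- `W` is an `n`-dimensional Brownian motion w.r.t. the filtration `𝓕` under `P`. -/
structure IsBrownianMotion {Ω : Type} [mΩ : MeasurableSpace Ω] (P : Measure Ω)
    (𝓕 : Filtration ℝ mΩ) {n : ℕ} (W : ℝ → Ω → Vec n) : Prop where
  zero : ∀ ω, W 0 ω = 0
  adapted : Adapted 𝓕 W
  cont : ∀ ω, Continuous fun t => W t ω
  indep_past : ∀ s t : ℝ, 0 ≤ s → s ≤ t →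
    Indep (MeasurableSpace.comap (fun ω => W t ω - W s ω) inferInstance) (𝓕 s) P
  gauss_law : ∀ s t : ℝ, 0 ≤ s → s ≤ t → ∀ i : Fin n,
    P.map (fun ω => W t ω i - W s ω i) = gaussianReal 0 ((t - s).toNNReal)
  coord_indep : ∀ s t : ℝ, 0 ≤ s → s ≤ t →
    iIndepFun (fun i ω => W t ω i - W s ω i) P

/-- An abstract Itô stochastic integral operator w.r.t. the Brownian motion `W`,
with its characteristic properties (vanishing at `0`, continuous adapted paths,
integral of constants, a.s. additivity and the martingale property for progressively
measurable square-integrable integrands). -/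
structure ItoIntegral {Ω : Type} [mΩ : MeasurableSpace Ω] (P : Measure Ω)
    (𝓕 : Filtration ℝ mΩ) (n : ℕ) (W : ℝ → Ω → Vec n) where
  integ : {m : ℕ} → (ℝ → Ω → Mat m n) → ℝ → Ω → Vec m
  integ_zero : ∀ {m : ℕ} (H : ℝ → Ω → Mat m n), integ H 0 = 0
  integ_cont : ∀ {m : ℕ} (H : ℝ → Ω → Mat m n) (ω : Ω), Continuous fun t => integ H t ω
  integ_adapted : ∀ {m : ℕ} (H : ℝ → Ω → Mat m n), Adapted 𝓕 (integ H)
  integ_const : ∀ {m : ℕ} (C : Mat m n) (t : ℝ), 0 ≤ t → ∀ ω,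
    integ (fun _ _ => C) t ω = mvMul C (W t ω)
  integ_add : ∀ {m : ℕ} (H₁ H₂ : ℝ → Ω → Mat m n),
    ProgMeasurable 𝓕 H₁ → ProgMeasurable 𝓕 H₂ →
    (∀ T : ℝ, 0 ≤ T →
      ∫⁻ ω, ENNReal.ofReal (∫ s in Set.Ioc (0:ℝ) T, (mnorm (H₁ s ω))^2) ∂P < ⊤) →
    (∀ T : ℝ, 0 ≤ T →
      ∫⁻ ω, ENNReal.ofReal (∫ s in Set.Ioc (0:ℝ) T, (mnorm (H₂ s ω))^2) ∂P < ⊤) →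
    ∀ t : ℝ, 0 ≤ t → ∀ᵐ ω ∂P,
      integ (fun s ω' => H₁ s ω' + H₂ s ω') t ω = integ H₁ t ω + integ H₂ t ω
  integ_martingale : ∀ {m : ℕ} (H : ℝ → Ω → Mat m n), ProgMeasurable 𝓕 H →
    (∀ T : ℝ, 0 ≤ T →
      ∫⁻ ω, ENNReal.ofReal (∫ s in Set.Ioc (0:ℝ) T, (mnorm (H s ω))^2) ∂P < ⊤) →
    Martingale (fun t => integ H t) 𝓕 P

variable {Ω : Type} [mΩ : MeasurableSpace Ω]

/-- `(X,Y,Z)` is a solution of the path-dependent FBSDE with coefficients `(b,σ,f)` on `[t₁,t₂]`,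
with initial path process `ι` (i.e. `X = ι` on `(-∞,t₁]`) and terminal condition
`Y_{t₂} = ξ(X)`, where the stochastic integrals are taken w.r.t. the Itô integral `I`. -/
structure IsSolution (P : Measure Ω) (𝓕 : Filtration ℝ mΩ) {n d : ℕ} {W : ℝ → Ω → Vec n}
    (I : ItoIntegral P 𝓕 n W)
    (b : ℝ → Ω → PathD d → Vec n → Mat n n → Vec d)
    (σ : ℝ → Ω → PathD d → Vec n → Mat n n → Mat d n)
    (f : ℝ → Ω → PathD d → Vec n → Mat n n → Vec n)
    (t₁ t₂ : ℝ)
    (ι : ℝ → Ω → Vec d) (ξ : Ω → PathD d → Vec n)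
    (X : ℝ → Ω → Vec d) (Y : ℝ → Ω → Vec n) (Z : ℝ → Ω → Mat n n) : Prop where
  X_adapted : Adapted 𝓕 X
  Y_adapted : Adapted 𝓕 Y
  Z_prog : ProgMeasurable 𝓕 Z
  X_cont : ∀ ω, Continuous fun t => X t ω
  Y_cont : ∀ ω, Continuous fun t => Y t ω
  X_sq : ∫⁻ ω, ENNReal.ofReal (∫ s in Set.Ioc (0:ℝ) t₂, (vnorm (X s ω))^2) ∂P < ⊤
  Y_sq : ∀ t ∈ Set.Icc t₁ t₂, ∫⁻ ω, ENNReal.ofReal ((vnorm (Y t ω))^2) ∂P < ⊤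
  Z_sq : ∫⁻ ω, ENNReal.ofReal (∫ s in Set.Ioc t₁ t₂, (mnorm (Z s ω))^2) ∂P < ⊤
  init : ∀ᵐ ω ∂P, ∀ s ≤ t₁, X s ω = ι s ω
  forward : ∀ᵐ ω ∂P, ∀ t ∈ Set.Icc t₁ t₂,
    X t ω = ι t₁ ω + (∫ s in Set.Ioc t₁ t, b s ω (fun r => X r ω) (Y s ω) (Z s ω))
      + (I.integ (fun s ω' => σ s ω' (fun r => X r ω') (Y s ω') (Z s ω')) t ω
         - I.integ (fun s ω' => σ s ω' (fun r => X r ω') (Y s ω') (Z s ω')) t₁ ω)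
  backward : ∀ᵐ ω ∂P, ∀ t ∈ Set.Icc t₁ t₂,
    Y t ω = ξ ω (fun r => X r ω) + (∫ s in Set.Ioc t t₂, f s ω (fun r => X r ω) (Y s ω) (Z s ω))
      - (I.integ Z t₂ ω - I.integ Z t ω)

/-- Two solutions coincide: `X`, `Y` are indistinguishable on `[t₁,t₂]` and `Z = Z'`
`dt⊗P`-almost everywhere on `[t₁,t₂]`. -/
def SolEquiv (P : Measure Ω) {n d : ℕ} (t₁ t₂ : ℝ)
    (X : ℝ → Ω → Vec d) (Y : ℝ → Ω → Vec n) (Z : ℝ → Ω → Mat n n)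
    (X' : ℝ → Ω → Vec d) (Y' : ℝ → Ω → Vec n) (Z' : ℝ → Ω → Mat n n) : Prop :=
  (∀ᵐ ω ∂P, ∀ t ∈ Set.Icc t₁ t₂, X t ω = X' t ω ∧ Y t ω = Y' t ω) ∧
  ∀ᵐ ω ∂P, ∀ᵐ s ∂(volume.restrict (Set.Ioc t₁ t₂)), Z s ω = Z' s ω

/-- Assumption A1 of the paper on the horizon `[0,T]`: progressive measurability and
non-anticipativity of the coefficients, `K₀`-Lipschitz continuity of `b,σ,f` in
`(x,y,z)` with the path distance `‖·‖_{2,t}`, `K₁`-Lipschitz continuity of `g`, and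
square integrability of the coefficients at `0`. -/
structure A1 (P : Measure Ω) (𝓕 : Filtration ℝ mΩ) {n d : ℕ} (T : ℝ)
    (b : ℝ → Ω → PathD d → Vec n → Mat n n → Vec d)
    (σ : ℝ → Ω → PathD d → Vec n → Mat n n → Mat d n)
    (f : ℝ → Ω → PathD d → Vec n → Mat n n → Vec n)
    (g : Ω → PathD d → Vec n) (K₀ K₁ : ℝ) : Prop where
  K₀_pos : 0 < K₀
  K₁_pos : 0 < K₁
  prog_b : ∀ (x : PathD d) (y : Vec n) (z : Mat n n), ProgMeasurable 𝓕 fun t ω => b t ω x y z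
  prog_σ : ∀ (x : PathD d) (y : Vec n) (z : Mat n n), ProgMeasurable 𝓕 fun t ω => σ t ω x y z
  prog_f : ∀ (x : PathD d) (y : Vec n) (z : Mat n n), ProgMeasurable 𝓕 fun t ω => f t ω x y z
  meas_g : ∀ x : PathD d, Measurable fun ω => g ω x
  nonanticip_b : ∀ t ω y z (x x' : PathD d), (∀ s ≤ t, x s = x' s) → b t ω x y z = b t ω x' y z
  nonanticip_σ : ∀ t ω y z (x x' : PathD d), (∀ s ≤ t, x s = x' s) → σ t ω x y z = σ t ω x' y z
  nonanticip_f : ∀ t ω y z (x x' : PathD d), (∀ s ≤ t, x s = x' s) → f t ω x y z = f t ω x' y z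
  nonanticip_g : ∀ ω (x x' : PathD d), (∀ s ≤ T, x s = x' s) → g ω x = g ω x'
  lip_b : ∀ t ∈ Set.Icc (0:ℝ) T, ∀ ω (x x' : PathD d) y y' z z',
    vnorm (b t ω x y z - b t ω x' y' z')
      ≤ K₀ * (pathNorm (x - x') t + vnorm (y - y') + mnorm (z - z'))
  lip_σ : ∀ t ∈ Set.Icc (0:ℝ) T, ∀ ω (x x' : PathD d) y y' z z',
    mnorm (σ t ω x y z - σ t ω x' y' z')
      ≤ K₀ * (pathNorm (x - x') t + vnorm (y - y') + mnorm (z - z'))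
  lip_f : ∀ t ∈ Set.Icc (0:ℝ) T, ∀ ω (x x' : PathD d) y y' z z',
    vnorm (f t ω x y z - f t ω x' y' z')
      ≤ K₀ * (pathNorm (x - x') t + vnorm (y - y') + mnorm (z - z'))
  lip_g : ∀ ω (x x' : PathD d), vnorm (g ω x - g ω x') ≤ K₁ * pathNorm (x - x') T
  int_zero : ∫⁻ ω, ENNReal.ofReal
      ((∫ t in Set.Ioc (0:ℝ) T, (vnorm (b t ω 0 0 0) + vnorm (f t ω 0 0 0)))^2
        + (∫ t in Set.Ioc (0:ℝ) T, (mnorm (σ t ω 0 0 0))^2)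
        + (vnorm (g ω 0))^2) ∂P < ⊤

/-- `sZ` is a Lipschitz constant of `σ` in the `z`-variable (the quantity `|∇_z σ|_∞`). -/
def LipZCoef {n d : ℕ} (T : ℝ)
    (σ : ℝ → Ω → PathD d → Vec n → Mat n n → Mat d n) (sZ : ℝ) : Prop :=
  0 ≤ sZ ∧ ∀ t ∈ Set.Icc (0:ℝ) T, ∀ ω (x : PathD d) y z z',
    mnorm (σ t ω x y z - σ t ω x y z') ≤ sZ * mnorm (z - z')

/-- `u` is a decoupling field for the FBSDE `(b,σ,f,g)` on `[t₀,T]`. -/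
structure IsDecouplingField (P : Measure Ω) (𝓕 : Filtration ℝ mΩ) {n d : ℕ}
    {W : ℝ → Ω → Vec n} (I : ItoIntegral P 𝓕 n W)
    (b : ℝ → Ω → PathD d → Vec n → Mat n n → Vec d)
    (σ : ℝ → Ω → PathD d → Vec n → Mat n n → Mat d n)
    (f : ℝ → Ω → PathD d → Vec n → Mat n n → Vec n)
    (g : Ω → PathD d → Vec n)
    (t₀ T : ℝ) (u : ℝ → Ω → PathD d → Vec n) : Prop where
  prog : ∀ x : PathD d, ProgMeasurable 𝓕 fun t ω => u t ω x
  terminal : ∀ ω x, u T ω x = g ω x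
  loc : ∃ δ > 0, ∀ t₁ t₂ : ℝ, t₀ ≤ t₁ → t₁ < t₂ → t₂ ≤ T → t₂ - t₁ ≤ δ →
    ∀ ι : ℝ → Ω → Vec d, Adapted 𝓕 ι → (∀ ω, Continuous fun t => ι t ω) →
      (∫⁻ ω, ENNReal.ofReal ((∫ s in Set.Ioc (0:ℝ) t₁, (vnorm (ι s ω))^2)
          + (vnorm (ι t₁ ω))^2) ∂P < ⊤) →
      ∃ X Y Z, IsSolution P 𝓕 I b σ f t₁ t₂ ι (u t₂) X Y Z ∧
        (∀ᵐ ω ∂P, ∀ t ∈ Set.Icc t₁ t₂, Y t ω = u t ω fun s => X s ω) ∧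
        ∀ X' Y' Z', IsSolution P 𝓕 I b σ f t₁ t₂ ι (u t₂) X' Y' Z' →
          SolEquiv P t₁ t₂ X Y Z X' Y' Z'

/-- A regular decoupling field: a decoupling field which is uniformly Lipschitz in the
path variable w.r.t. `‖·‖_{2,t}`. -/
def IsRegularDF (P : Measure Ω) (𝓕 : Filtration ℝ mΩ) {n d : ℕ}
    {W : ℝ → Ω → Vec n} (I : ItoIntegral P 𝓕 n W)
    (b : ℝ → Ω → PathD d → Vec n → Mat n n → Vec d)
    (σ : ℝ → Ω → PathD d → Vec n → Mat n n → Mat d n)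
    (f : ℝ → Ω → PathD d → Vec n → Mat n n → Vec n)
    (g : Ω → PathD d → Vec n)
    (t₀ T : ℝ) (u : ℝ → Ω → PathD d → Vec n) : Prop :=
  IsDecouplingField P 𝓕 I b σ f g t₀ T u ∧
  ∃ K > 0, ∀ t ∈ Set.Icc t₀ T, ∀ᵐ ω ∂P, ∀ x x' : PathD d,
    vnorm (u t ω x - u t ω x') ≤ K * pathNorm (x - x') t

end
noncomputable section CharacteristicBSDE

/-- Mixed vector `(y'_1,…,y'_{k-1}, y_k, …, y_n)`. -/
def mixLt {n : ℕ} (y y' : Vec n) (k : Fin n) : Vec n := fun j => if j < k then y' j else y j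
/-- Mixed vector `(y'_1,…,y'_k, y_{k+1}, …, y_n)`. -/
def mixLe {n : ℕ} (y y' : Vec n) (k : Fin n) : Vec n := fun j => if j ≤ k then y' j else y j
/-- Mixed matrix, primed strictly before position `p` in the lexicographic enumeration. -/
def mixZLt {n : ℕ} (z z' : Mat n n) (p : Fin n × Fin n) : Mat n n :=
  fun i j => if i.1 * n + j.1 < p.1.1 * n + p.2.1 then z' i j else z i j
/-- Mixed matrix, primed up to and including position `p`. -/
def mixZLe {n : ℕ} (z z' : Mat n n) (p : Fin n × Fin n) : Mat n n :=
  fun i j => if i.1 * n + j.1 ≤ p.1.1 * n + p.2.1 then z' i j else z i j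

/-- Difference quotient of a coefficient `ξ` in the path variable, with the path
distance `‖Δx‖_{2,t}` in the denominator. -/
def dquotX {d n : ℕ} {E : Type} [AddCommGroup E] [Module ℝ E]
    (ξ : PathD d → Vec n → Mat n n → E) (t : ℝ) (x x' : PathD d) (y : Vec n) (z : Mat n n) : E :=
  (pathNorm (x - x') t)⁻¹ • (ξ x y z - ξ x' y z)

/-- Component-wise difference quotients of a coefficient `ξ` in the `y`-variable. -/
def dquotY {d n : ℕ} {E : Type} [AddCommGroup E] [Module ℝ E]
    (ξ : PathD d → Vec n → Mat n n → E) (x' : PathD d) (y y' : Vec n) (z : Mat n n) :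
    Fin n → E :=
  fun k => (y k - y' k)⁻¹ • (ξ x' (mixLt y y' k) z - ξ x' (mixLe y y' k) z)

/-- Component-wise difference quotients of a coefficient `ξ` in the `z`-variable. -/
def dquotZ {d n : ℕ} {E : Type} [AddCommGroup E] [Module ℝ E]
    (ξ : PathD d → Vec n → Mat n n → E) (x' : PathD d) (y' : Vec n) (z z' : Mat n n) :
    Fin n × Fin n → E :=
  fun p => (z p.1 p.2 - z' p.1 p.2)⁻¹ • (ξ x' y' (mixZLt z z' p) - ξ x' y' (mixZLe z z' p))

/-- The coefficients `(A_t, B_t, C_t, D_t, F_t)` of the characteristic BSDE associated to a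
pair of solutions `(X,Y,Z)`, `(X',Y',Z')` of the FBSDE, evaluated at `(t,ω)`. -/
def charCoeffs {Ω : Type} {n d : ℕ}
    (b : ℝ → Ω → PathD d → Vec n → Mat n n → Vec d)
    (σ : ℝ → Ω → PathD d → Vec n → Mat n n → Mat d n)
    (f : ℝ → Ω → PathD d → Vec n → Mat n n → Vec n)
    (X : ℝ → Ω → Vec d) (Y : ℝ → Ω → Vec n) (Z : ℝ → Ω → Mat n n)
    (X' : ℝ → Ω → Vec d) (Y' : ℝ → Ω → Vec n) (Z' : ℝ → Ω → Mat n n)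
    (t : ℝ) (ω : Ω) : Fin 5 → ℝ :=
  let x : PathD d := fun s => X s ω
  let x' : PathD d := fun s => X' s ω
  let yv : Vec n := Y t ω
  let yv' : Vec n := Y' t ω
  let zv : Mat n n := Z t ω
  let zv' : Mat n n := Z' t ω
  let D : ℝ := pathNorm (x - x') t
  let β : Vec d := D⁻¹ • (X t ω - X' t ω)
  let Pv : Vec n := (vnorm (yv - yv'))⁻¹ • (yv - yv')
  let α : Mat n n := D⁻¹ • (zv - zv')
  let bx : Vec d := dquotX (b t ω) t x x' yv zv
  let σx : Mat d n := dquotX (σ t ω) t x x' yv zv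
  let fx : Vec n := dquotX (f t ω) t x x' yv zv
  let bY : Fin n → Vec d := dquotY (b t ω) x' yv yv' zv
  let σY : Fin n → Mat d n := dquotY (σ t ω) x' yv yv' zv
  let fY : Fin n → Vec n := dquotY (f t ω) x' yv yv' zv
  let bZ : Fin n × Fin n → Vec d := dquotZ (b t ω) x' yv' zv zv'
  let σZ : Fin n × Fin n → Mat d n := dquotZ (σ t ω) x' yv' zv zv'
  let fZ : Fin n × Fin n → Vec n := dquotZ (f t ω) x' yv' zv zv'
  let σyP : Mat d n := fun i j => ∑ k, Pv k * σY k i j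
  let byP : Vec d := fun i => ∑ k, Pv k * bY k i
  let fyP : Vec n := fun i => ∑ k, Pv k * fY k i
  let trσzα : Mat d n := fun i j => ∑ p : Fin n × Fin n, α p.1 p.2 * σZ p i j
  let trbzα : Vec d := fun i => ∑ p : Fin n × Fin n, α p.1 p.2 * bZ p i
  let trfzα : Vec n := fun i => ∑ p : Fin n × Fin n, α p.1 p.2 * fZ p i
  let S : Mat d n := σx + trσzα
  ![ mdot σyP σyP - 8 * vdot (mvMul (transp σyP) β) (mvMul (transp σyP) β),
     2 * vdot β byP + 2 * mdot σyP S - 16 * vdot (mvMul (transp σyP) β) (mvMul (transp S) β),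
     2 * vdot Pv fyP + vdot β β + 2 * vdot β (bx + trbzα) + mdot σx σx
       - 8 * vdot (mvMul (transp σx) β) (mvMul (transp σx) β),
     2 * vdot Pv fx + 2 * vdot Pv trfzα,
     - mdot α α ]

/-- The polynomial `𝓕_t(h) = A_t h² + B_t h^{3/2} + C_t h + D_t h^{1/2} + F_t` appearing as
the driver of the characteristic BSDE. -/
def charPoly {Ω : Type} {n d : ℕ}
    (b : ℝ → Ω → PathD d → Vec n → Mat n n → Vec d)
    (σ : ℝ → Ω → PathD d → Vec n → Mat n n → Mat d n)
    (f : ℝ → Ω → PathD d → Vec n → Mat n n → Vec n)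
    (X : ℝ → Ω → Vec d) (Y : ℝ → Ω → Vec n) (Z : ℝ → Ω → Mat n n)
    (X' : ℝ → Ω → Vec d) (Y' : ℝ → Ω → Vec n) (Z' : ℝ → Ω → Mat n n)
    (t : ℝ) (ω : Ω) (h : ℝ) : ℝ :=
  charCoeffs b σ f X Y Z X' Y' Z' t ω 0 * h^2
    + charCoeffs b σ f X Y Z X' Y' Z' t ω 1 * (h * Real.sqrt h)
    + charCoeffs b σ f X Y Z X' Y' Z' t ω 2 * h
    + charCoeffs b σ f X Y Z X' Y' Z' t ω 3 * Real.sqrt h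
    + charCoeffs b σ f X Y Z X' Y' Z' t ω 4

/-- The ODE `ẏ_t = −G(t,y_t)` is a dominating ODE of the FBSDE `(b,σ,f,g)` on `[0,T]`:
(i) along any pair of solutions the driver `𝓕_t` of the characteristic BSDE is bounded by
`G(t,·)` a.s., and (ii) `G` and `∂G/∂h` are locally bounded by `L¹` functions of time. -/
def IsDominatingODE {Ω : Type} [mΩ : MeasurableSpace Ω] (P : Measure Ω)
    (𝓕 : Filtration ℝ mΩ) {n d : ℕ} {W : ℝ → Ω → Vec n} (I : ItoIntegral P 𝓕 n W)
    (b : ℝ → Ω → PathD d → Vec n → Mat n n → Vec d)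
    (σ : ℝ → Ω → PathD d → Vec n → Mat n n → Mat d n)
    (f : ℝ → Ω → PathD d → Vec n → Mat n n → Vec n)
    (g : Ω → PathD d → Vec n)
    (T : ℝ) (G : ℝ → ℝ → ℝ) : Prop :=
  (∀ t₀ ∈ Set.Icc (0:ℝ) T, ∀ (ι ι' : ℝ → Ω → Vec d)
      (X : ℝ → Ω → Vec d) (Y : ℝ → Ω → Vec n) (Z : ℝ → Ω → Mat n n)
      (X' : ℝ → Ω → Vec d) (Y' : ℝ → Ω → Vec n) (Z' : ℝ → Ω → Mat n n),
    IsSolution P 𝓕 I b σ f t₀ T ι g X Y Z →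
    IsSolution P 𝓕 I b σ f t₀ T ι' g X' Y' Z' →
    ∀ t ∈ Set.Icc t₀ T, ∀ᵐ ω ∂P, ∀ h : ℝ, 0 ≤ h →
      charPoly b σ f X Y Z X' Y' Z' t ω h ≤ G t h) ∧
  (∀ M > (0:ℝ), ∃ l lhat : ℝ → ℝ,
    IntegrableOn l (Set.Icc (0:ℝ) T) volume ∧ IntegrableOn lhat (Set.Icc (0:ℝ) T) volume ∧
    ∀ t ∈ Set.Icc (0:ℝ) T, ∀ h ∈ Set.Icc (-M) M, |G t h| ≤ l t ∧ |deriv (G t) h| ≤ lhat t)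

end CharacteristicBSDE

/-!
From the forward equation at `T` and the backward equation at `0`,
`Y₀ = x₀ + ∫₀ᵀ (k + Z) dW - ∫₀ᵀ Z dW = x₀ + k W_T` a.s. Hence `W_T` agrees a.s. with the
`𝓕₀`-measurable variable `(Y₀ - x₀) / k`; since `W_T` is independent of `𝓕₀`, the event
`{W_T ≤ 0}` would be independent of itself and so have probability `0` or `1`, which is false
for a nondegenerate Gaussian.
-/

/-- `∫₀ᵗ f²`, read with the Bochner convention: it is `0` when `f²` is not integrable. -/
noncomputable def sqMass (f : ℝ → ℝ) (t : ℝ) : ℝ := ∫ s in Ioc 0 t, f s ^ 2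

lemma not_memLp_two_inv_Ioc {t : ℝ} (ht : 0 < t) :
    ¬ MemLp (fun s : ℝ => s⁻¹) 2 (volume.restrict (Ioc 0 t)) := by
  intro h
  have hint : IntegrableOn (fun s : ℝ => s ^ (-2 : ℝ)) (Ioo 0 t) := by
    have hsq : IntegrableOn (fun s : ℝ => s⁻¹ ^ 2) (Ioc 0 t) :=
      (memLp_two_iff_integrable_sq h.1).1 h
    refine (hsq.mono_set Ioo_subset_Ioc_self).congr_fun (fun s hs => ?_) measurableSet_Ioo
    simp [Real.rpow_neg hs.1.le, inv_pow]
  rw [intervalIntegral.integrableOn_Ioo_rpow_iff ht] at hint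
  norm_num at hint

lemma sqMass_const_mul_inv (c t : ℝ) : sqMass (fun s => c * s⁻¹) t = 0 := by
  rcases eq_or_ne c 0 with rfl | hc
  · simp [sqMass]
  rcases le_or_gt t 0 with ht | ht
  · simp [sqMass, Ioc_eq_empty_of_le ht]
  refine integral_undef fun hint => not_memLp_two_inv_Ioc ht ?_
  have hmem : MemLp (fun s : ℝ => c * s⁻¹) 2 (volume.restrict (Ioc 0 t)) :=
    (memLp_two_iff_integrable_sq (by fun_prop)).2 hint
  simpa [← mul_assoc, hc] using hmem.const_mul c⁻¹

lemma sqMass_const {t : ℝ} (ht : 0 ≤ t) (k : ℝ) : sqMass (fun _ => k) t = k ^ 2 * t := by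
  simp [sqMass, Real.volume_real_Ioc_of_le ht, mul_comm]

lemma integrableOn_and_pos_of_sqMass_ne_zero {f : ℝ → ℝ} {t : ℝ} (h : sqMass f t ≠ 0) :
    IntegrableOn (fun s => f s ^ 2) (Ioc 0 t) ∧ 0 < t := by
  refine ⟨by_contra fun hi => h (integral_undef hi), lt_of_not_ge fun ht => h ?_⟩
  simp [sqMass, Ioc_eq_empty_of_le ht]

lemma eq_of_integrableOn_sq_sub_mul_inv {f : ℝ → ℝ} {t c c' : ℝ} (ht : 0 < t)
    (hf : AEStronglyMeasurable f (volume.restrict (Ioc 0 t)))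
    (h : IntegrableOn (fun s => (f s - c * s⁻¹) ^ 2) (Ioc 0 t))
    (h' : IntegrableOn (fun s => (f s - c' * s⁻¹) ^ 2) (Ioc 0 t)) : c = c' := by
  by_contra hcc
  have hm : MemLp (fun s => f s - c * s⁻¹) 2 (volume.restrict (Ioc 0 t)) :=
    (memLp_two_iff_integrable_sq (hf.sub (by fun_prop))).2 h
  have hm' : MemLp (fun s => f s - c' * s⁻¹) 2 (volume.restrict (Ioc 0 t)) :=
    (memLp_two_iff_integrable_sq (hf.sub (by fun_prop))).2 h'
  refine not_memLp_two_inv_Ioc ht ?_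
  convert (hm'.sub hm).const_mul (c - c')⁻¹ using 1
  ext s
  simp only [Pi.sub_apply]
  field_simp [sub_ne_zero.2 hcc]
  ring

lemma ae_eq_zero_of_forall_rat_sqMass_eq_zero {f : ℝ → ℝ} (h : ∀ q : ℚ, sqMass f q = 0)
    {t : ℝ} (hf : IntegrableOn (fun s => f s ^ 2) (Ioc 0 t)) :
    ∀ᵐ s ∂volume.restrict (Ioc 0 t), f s = 0 := by
  rw [← Measure.restrict_congr_set Ioo_ae_eq_Ioc]
  have hcover : Ioo 0 t ⊆ ⋃ q : {q : ℚ // (q : ℝ) < t}, Ioc 0 (q : ℝ) := fun s hs => by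
    obtain ⟨q, hsq, hqt⟩ := exists_rat_btwn hs.2
    exact mem_iUnion.2 ⟨⟨q, hqt⟩, hs.1, hsq.le⟩
  refine ae_restrict_of_ae_restrict_of_subset hcover (ae_restrict_iUnion_iff _ _ |>.2 ?_)
  rintro ⟨q, hqt⟩
  have hq : IntegrableOn (fun s => f s ^ 2) (Ioc 0 (q : ℝ)) :=
    hf.mono_set (Ioc_subset_Ioc_right hqt.le)
  filter_upwards [(integral_eq_zero_iff_of_nonneg (fun s => sq_nonneg (f s)) hq).1 (h q)]
    with s hs using pow_eq_zero_iff two_ne_zero |>.1 hs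

lemma sqMass_eq_zero_of_forall_rat {f : ℝ → ℝ} (h : ∀ q : ℚ, sqMass f q = 0) (t : ℝ) :
    sqMass f t = 0 := by
  by_cases hf : IntegrableOn (fun s => f s ^ 2) (Ioc 0 t)
  · refine integral_eq_zero_of_ae ?_
    filter_upwards [ae_eq_zero_of_forall_rat_sqMass_eq_zero h hf] with s hs
    simp [hs]
  · exact integral_undef hf

lemma sqMass_const_add_le_of_forall_rat {f : ℝ → ℝ} (h : ∀ q : ℚ, sqMass f q = 0) {t : ℝ}
    (ht : 0 ≤ t) (hf : AEStronglyMeasurable f (volume.restrict (Ioc 0 t))) (k : ℝ) :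
    sqMass (fun s => k + f s) t ≤ k ^ 2 * t := by
  by_cases hkf : IntegrableOn (fun s => (k + f s) ^ 2) (Ioc 0 t)
  · have hmem : MemLp f 2 (volume.restrict (Ioc 0 t)) := by
      have hsub := ((memLp_two_iff_integrable_sq (hf.const_add k)).2 hkf).sub (memLp_const k)
      rwa [show ((fun s => k + f s) - fun _ => k) = f from
        funext fun s => add_sub_cancel_left k (f s)] at hsub
    have hzero :=
      ae_eq_zero_of_forall_rat_sqMass_eq_zero h ((memLp_two_iff_integrable_sq hf).1 hmem)
    have hk : (fun s => (k + f s) ^ 2) =ᵐ[volume.restrict (Ioc 0 t)] fun _ => k ^ 2 := by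
      filter_upwards [hzero] with s hs
      simp [hs]
    rw [sqMass, integral_congr_ae hk, ← sqMass, sqMass_const ht]
  · rw [sqMass, integral_undef hkf]
    positivity

def scalarMat {Ω : Type} (h : ℝ → Ω → ℝ) : ℝ → Ω → Mat 1 1 := fun s ω _ _ => h s ω

lemma scalarMat_entry {Ω : Type} (Z : ℝ → Ω → Mat 1 1) :
    scalarMat (fun s ω => Z s ω 0 0) = Z := by
  funext s ω i j
  simp [scalarMat, Subsingleton.elim i 0, Subsingleton.elim j 0]

lemma mnorm_sq_eq_sq_entry (A : Mat 1 1) : mnorm A ^ 2 = A 0 0 ^ 2 := by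
  have h : mdot A A = A 0 0 ^ 2 := by simp [mdot, sq]
  rw [mnorm, h, Real.sq_sqrt (sq_nonneg _)]

lemma mvMul_const_eq_smul (k : ℝ) (v : Vec 1) : mvMul (fun _ _ => k) v = k • v := by
  funext i
  simp [mvMul, Subsingleton.elim i 0]

namespace MeasureTheory

variable {Ω : Type} [mΩ : MeasurableSpace Ω] {𝓕 : Filtration ℝ mΩ}

lemma isStronglyProgressive_deterministic {g : ℝ → ℝ} (hg : Measurable g) :
    IsStronglyProgressive 𝓕 (fun s (_ : Ω) => g s) := fun t =>
  (show Measurable[Subtype.instMeasurableSpace.prod (𝓕 t)] fun p : Iic t × Ω => g p.1 from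
    (hg.comp measurable_subtype_coe).comp measurable_fst).stronglyMeasurable

namespace IsStronglyProgressive

variable {z : ℝ → Ω → ℝ}

lemma measurable_comp_min (hz : IsStronglyProgressive 𝓕 z) (t : ℝ) :
    Measurable fun p : ℝ × Ω => z (min p.1 t) p.2 := by
  have hle : (Subtype.instMeasurableSpace : MeasurableSpace (Iic t)).prod (𝓕 t)
      ≤ Subtype.instMeasurableSpace.prod mΩ :=
    sup_le_sup le_rfl (MeasurableSpace.comap_mono (𝓕.le t))
  exact ((hz t).measurable.mono hle le_rfl).comp
    (((measurable_fst.min measurable_const).subtype_mk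
      (h := fun _ => mem_Iic.2 (min_le_right _ _))).prodMk measurable_snd)

lemma aestronglyMeasurable_restrict_Ioc (hz : IsStronglyProgressive 𝓕 z) (ω : Ω) (t : ℝ) :
    AEStronglyMeasurable (z · ω) (volume.restrict (Ioc 0 t)) := by
  refine ((hz.measurable_comp_min t).comp
    (measurable_prodMk_right (y := ω))).aestronglyMeasurable.congr ?_
  filter_upwards [ae_restrict_mem measurableSet_Ioc] with s hs
  simp [min_eq_left hs.2]

lemma measurable_sqMass_sub (hz : IsStronglyProgressive 𝓕 z) {g : ℝ → ℝ} (hg : Measurable g)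
    (t : ℝ) : Measurable fun ω => sqMass (fun s => z s ω - g s) t := by
  have hjoint : StronglyMeasurable fun p : Ω × ℝ => (z (min p.2 t) p.1 - g p.2) ^ 2 :=
    ((((hz.measurable_comp_min t).comp measurable_swap).sub (hg.comp measurable_snd)).pow_const
      2).stronglyMeasurable
  convert (hjoint.integral_prod_right' (ν := volume.restrict (Ioc 0 t))).measurable using 1
  funext ω
  refine setIntegral_congr_fun measurableSet_Ioc fun s hs => ?_
  simp [min_eq_left hs.2]

protected lemma scalarMat {h : ℝ → Ω → ℝ} (hh : IsStronglyProgressive 𝓕 h) :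
    IsStronglyProgressive 𝓕 (scalarMat h) := fun t =>
  (continuous_pi fun _ => continuous_pi fun _ => continuous_id).comp_stronglyMeasurable (hh t)

end IsStronglyProgressive

end MeasureTheory

/-- The sets of `ω` at which `z(·, ω) - c s⁻¹` has nonzero square mass on some `(0, q]` are
pairwise disjoint in `c`, so all but countably many of them are null. -/
lemma exists_ae_forall_rat_sqMass_sub_mul_inv_eq_zero {Ω : Type} {mΩ : MeasurableSpace Ω}
    {μ : Measure Ω} [SFinite μ] {z : ℝ → Ω → ℝ}
    (hmeas : ∀ c q, Measurable fun ω => sqMass (fun s => z s ω - c * s⁻¹) q)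
    (hsec : ∀ ω t, AEStronglyMeasurable (z · ω) (volume.restrict (Ioc 0 t))) :
    ∃ c : ℝ, ∀ᵐ ω ∂μ, ∀ q : ℚ, sqMass (fun s => z s ω - c * s⁻¹) q = 0 := by
  set bad : ℝ → Set Ω := fun c => ⋃ q : ℚ, {ω | sqMass (fun s => z s ω - c * s⁻¹) q ≠ 0}
  have hbad_meas : ∀ c, MeasurableSet (bad c) := fun c =>
    .iUnion fun q => (hmeas c q (measurableSet_singleton 0)).compl
  have hbad_disj : Pairwise (Function.onFun Disjoint bad) := by
    refine fun c c' hcc => disjoint_left.2 fun ω hω hω' => hcc ?_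
    obtain ⟨q, hq⟩ := mem_iUnion.1 hω
    obtain ⟨q', hq'⟩ := mem_iUnion.1 hω'
    obtain ⟨hint, hqpos⟩ := integrableOn_and_pos_of_sqMass_ne_zero hq
    obtain ⟨hint', hqpos'⟩ := integrableOn_and_pos_of_sqMass_ne_zero hq'
    exact eq_of_integrableOn_sq_sub_mul_inv (lt_min hqpos hqpos') (hsec ω _)
      (hint.mono_set (Ioc_subset_Ioc_right (min_le_left _ _)))
      (hint'.mono_set (Ioc_subset_Ioc_right (min_le_right _ _)))
  obtain ⟨c, hc⟩ : ∃ c, c ∉ {c | 0 < μ (bad c)} := by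
    by_contra! h
    exact not_countable_univ
      ((Measure.countable_meas_pos_of_disjoint_iUnion hbad_meas hbad_disj).mono fun c _ => h c)
  refine ⟨c, measure_mono_null (fun ω hω => ?_) (le_zero_iff.1 (not_lt.1 hc))⟩
  simpa [bad] using hω

/-- The square-integrability hypothesis of `ItoIntegral.integ_add`. -/
def ItoSqIntegrable {Ω : Type} [MeasurableSpace Ω] (P : Measure Ω) {m n : ℕ}
    (H : ℝ → Ω → Mat m n) : Prop :=
  ∀ T : ℝ, 0 ≤ T → ∫⁻ ω, ENNReal.ofReal (∫ s in Ioc (0:ℝ) T, (mnorm (H s ω)) ^ 2) ∂P < ⊤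

lemma itoSqIntegrable_scalarMat {Ω : Type} [MeasurableSpace Ω] {P : Measure Ω} [IsFiniteMeasure P]
    {h : ℝ → Ω → ℝ} (hb : ∀ T, 0 ≤ T → ∃ C, ∀ᵐ ω ∂P, sqMass (fun s => h s ω) T ≤ C) :
    ItoSqIntegrable P (scalarMat h) := by
  intro T hT
  obtain ⟨C, hC⟩ := hb T hT
  simp only [mnorm_sq_eq_sq_entry]
  calc ∫⁻ ω, ENNReal.ofReal (sqMass (fun s => h s ω) T) ∂P
      ≤ ∫⁻ _, ENNReal.ofReal C ∂P :=
        lintegral_mono_ae (hC.mono fun _ hω => ENNReal.ofReal_le_ofReal hω)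
    _ < ⊤ := by simp [lintegral_const, ENNReal.mul_lt_top]

namespace ItoIntegral

variable {Ω : Type} [mΩ : MeasurableSpace Ω] {P : Measure Ω} {𝓕 : Filtration ℝ mΩ}
  {W : ℝ → Ω → Vec 1}

lemma integ_scalarMat_add_ae (I : ItoIntegral P 𝓕 1 W) {h₁ h₂ : ℝ → Ω → ℝ}
    (hp₁ : IsStronglyProgressive 𝓕 h₁) (hp₂ : IsStronglyProgressive 𝓕 h₂)
    (hs₁ : ItoSqIntegrable P (scalarMat h₁)) (hs₂ : ItoSqIntegrable P (scalarMat h₂))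
    {t : ℝ} (ht : 0 ≤ t) :
    ∀ᵐ ω ∂P, I.integ (scalarMat fun s ω => h₁ s ω + h₂ s ω) t ω
      = I.integ (scalarMat h₁) t ω + I.integ (scalarMat h₂) t ω :=
  I.integ_add _ _ hp₁.scalarMat hp₂.scalarMat hs₁ hs₂ t ht

/-- No integrability of `z` is needed: the hypotheses of `integ_add` are Bochner integrals, which
vanish for integrands that are not square integrable. Split `z = (z - c/s) + c/s`: the term `c/s`
is never square integrable near `0`, and for all but countably many `c` the term `z - c/s` is
square integrable only where it vanishes. -/
theorem integ_scalarMat_const_add_ae [IsFiniteMeasure P] (I : ItoIntegral P 𝓕 1 W)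
    {z : ℝ → Ω → ℝ} (hz : IsStronglyProgressive 𝓕 z) (k : ℝ) {t : ℝ} (ht : 0 ≤ t) :
    ∀ᵐ ω ∂P,
      I.integ (scalarMat fun s ω => k + z s ω) t ω = k • W t ω + I.integ (scalarMat z) t ω := by
  obtain ⟨c, hc⟩ := exists_ae_forall_rat_sqMass_sub_mul_inv_eq_zero (μ := P)
    (fun c => hz.measurable_sqMass_sub (by fun_prop)) hz.aestronglyMeasurable_restrict_Ioc
  set r : ℝ → Ω → ℝ := fun s ω => z s ω - c * s⁻¹
  have hr : IsStronglyProgressive 𝓕 r :=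
    hz.sub (isStronglyProgressive_deterministic (by fun_prop))
  have hr_rat : ∀ᵐ ω ∂P, ∀ q : ℚ, sqMass (fun s => r s ω) q = 0 := hc
  have hK : ItoSqIntegrable P (scalarMat fun _ _ => k) :=
    itoSqIntegrable_scalarMat fun T hT => ⟨k ^ 2 * T, ae_of_all _ fun _ => (sqMass_const hT k).le⟩
  have hJ : ItoSqIntegrable P (scalarMat fun s _ => c * s⁻¹) :=
    itoSqIntegrable_scalarMat fun T _ => ⟨0, ae_of_all _ fun _ => (sqMass_const_mul_inv c T).le⟩
  have hR : ItoSqIntegrable P (scalarMat r) := itoSqIntegrable_scalarMat fun T _ =>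
    ⟨0, hr_rat.mono fun _ hω => (sqMass_eq_zero_of_forall_rat hω T).le⟩
  have hKR : ItoSqIntegrable P (scalarMat fun s ω => k + r s ω) :=
    itoSqIntegrable_scalarMat fun T hT => ⟨k ^ 2 * T, hr_rat.mono fun ω hω =>
      sqMass_const_add_le_of_forall_rat hω hT (hr.aestronglyMeasurable_restrict_Ioc ω T) k⟩
  have hpK : IsStronglyProgressive 𝓕 fun (_ : ℝ) (_ : Ω) => k := isStronglyProgressive_const _ k
  have hpJ : IsStronglyProgressive 𝓕 fun s (_ : Ω) => c * s⁻¹ :=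
    isStronglyProgressive_deterministic (by fun_prop)
  have hsplit : (fun s ω => r s ω + c * s⁻¹) = z := by
    funext s ω
    simp [r]
  have hsplit' : (fun s ω => (k + r s ω) + c * s⁻¹) = fun s ω => k + z s ω := by
    funext s ω
    simp only [r]
    ring
  have hKW : I.integ (scalarMat fun _ _ => k) t = fun ω => k • W t ω := funext fun ω => by
    rw [← mvMul_const_eq_smul]
    exact I.integ_const (fun _ _ => k) t ht ω
  have e1 := I.integ_scalarMat_add_ae hpK hr hK hR ht
  have e2 := I.integ_scalarMat_add_ae (hpK.add hr) hpJ hKR hJ ht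
  have e3 := I.integ_scalarMat_add_ae hr hpJ hR hJ ht
  rw [hsplit'] at e2
  rw [hsplit] at e3
  filter_upwards [e1, e2, e3] with ω h1 h2 h3
  rw [h2, h1, h3, hKW, add_assoc]

end ItoIntegral

lemma ProbabilityTheory.gaussianReal_Iic_ne_zero {μ : ℝ} {v : ℝ≥0} (hv : v ≠ 0) (a : ℝ) :
    gaussianReal μ v (Iic a) ≠ 0 := fun h =>
  by simpa using gaussianReal_absolutelyContinuous' μ hv h

lemma ProbabilityTheory.gaussianReal_Iic_ne_one {μ : ℝ} {v : ℝ≥0} (hv : v ≠ 0) (a : ℝ) :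
    gaussianReal μ v (Iic a) ≠ 1 := fun h => by
  have hIoi : gaussianReal μ v (Ioi a) = 0 := by
    rw [← compl_Iic, prob_compl_eq_zero_iff measurableSet_Iic]
    exact h
  simpa using gaussianReal_absolutelyContinuous' μ hv hIoi

lemma ProbabilityTheory.Indep.measure_eq_zero_or_one_of_ae_eq {Ω : Type*}
    {m₁ m₂ mΩ : MeasurableSpace Ω} {μ : @Measure Ω mΩ} [IsFiniteMeasure μ] (h : Indep m₁ m₂ μ)
    {A B : Set Ω} (hA : MeasurableSet[m₁] A) (hB : MeasurableSet[m₂] B) (hAB : A =ᵐ[μ] B) :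
    μ A = 0 ∨ μ A = 1 := by
  have hinter : (A ∩ B : Set Ω) =ᵐ[μ] A := eventuallyEq_set.2 <| by
    filter_upwards [eventuallyEq_set.1 hAB] with ω hω
    simp [hω]
  have hsq := (Indep_iff _ _ μ).1 h A B hA hB
  rw [measure_congr hinter, ← measure_congr hAB] at hsq
  rcases eq_or_ne (μ A) 0 with h0 | h0
  · exact .inl h0
  · exact .inr ((ENNReal.mul_right_inj h0 (measure_ne_top μ A)).1 (by rw [mul_one, ← hsq]))

lemma IsBrownianMotion.not_ae_eq_of_measurable_zero {Ω : Type} [mΩ : MeasurableSpace Ω]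
    {P : Measure Ω} [IsProbabilityMeasure P] {𝓕 : Filtration ℝ mΩ} {n : ℕ}
    {W : ℝ → Ω → Vec n} (hW : IsBrownianMotion P 𝓕 W) {T : ℝ} (hT : 0 < T) (i : Fin n)
    {G : Ω → ℝ} (hG : Measurable[𝓕 0] G) : ¬ (fun ω => W T ω i) =ᵐ[P] G := by
  intro hWG
  have hindep : Indep (MeasurableSpace.comap (W T) inferInstance) (𝓕 0) P := by
    convert hW.indep_past 0 T le_rfl hT.le using 3
    funext ω
    rw [hW.zero, sub_zero]
  have hA : MeasurableSet[MeasurableSpace.comap (W T) inferInstance] {ω | W T ω i ≤ 0} :=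
    ⟨{v | v i ≤ 0}, measurable_pi_apply i measurableSet_Iic, rfl⟩
  have hAB : {ω | W T ω i ≤ 0} =ᵐ[P] {ω | G ω ≤ 0} := eventuallyEq_set.2 <| by
    filter_upwards [hWG] with ω hω
    rw [hω]
  have hlaw : P {ω | W T ω i ≤ 0} = gaussianReal 0 T.toNNReal (Iic 0) := by
    have hWm : Measurable fun ω => W T ω i :=
      (measurable_pi_apply i).comp ((hW.adapted T).mono (𝓕.le T) le_rfl)
    have := hW.gauss_law 0 T le_rfl hT.le i
    simp only [hW.zero, Pi.zero_apply, sub_zero] at this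
    rw [← this, Measure.map_apply hWm measurableSet_Iic]
    rfl
  have hv : T.toNNReal ≠ 0 := (Real.toNNReal_pos.2 hT).ne'
  rcases hindep.measure_eq_zero_or_one_of_ae_eq hA (measurableSet_le hG measurable_const) hAB
    with h | h <;> rw [hlaw] at h
  · exact gaussianReal_Iic_ne_zero hv 0 h
  · exact gaussianReal_Iic_ne_one hv 0 h

lemma Y_zero_eq_of_delarue_solution {Ω : Type} [mΩ : MeasurableSpace Ω] {P : Measure Ω}
    [IsFiniteMeasure P] {𝓕 : Filtration ℝ mΩ} {W : ℝ → Ω → Vec 1} {I : ItoIntegral P 𝓕 1 W}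
    {k T x₀ : ℝ} {X Y : ℝ → Ω → Vec 1} {Z : ℝ → Ω → Mat 1 1}
    (hsol : IsSolution P 𝓕 I (fun _ _ _ _ _ => (0 : Vec 1))
      (fun _ _ _ _ z => fun i j => k + z i j) (fun _ _ _ _ _ => (0 : Vec 1)) 0 T
      (fun _ _ => fun _ => x₀) (fun _ x => x T) X Y Z)
    (hT : 0 ≤ T) :
    ∀ᵐ ω ∂P, Y 0 ω = (fun _ => x₀) + k • W T ω := by
  have hz : IsStronglyProgressive 𝓕 fun s ω => Z s ω 0 0 := fun t =>
    (show Continuous fun A : Mat 1 1 => A 0 0 by fun_prop).comp_stronglyMeasurable (hsol.Z_prog t)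
  have hσ : (fun s ω => (fun i j => k + Z s ω i j : Mat 1 1))
      = scalarMat fun s ω => k + Z s ω 0 0 := by
    funext s ω i j
    simp [scalarMat, Subsingleton.elim i 0, Subsingleton.elim j 0]
  have hadd := I.integ_scalarMat_const_add_ae hz k hT
  rw [scalarMat_entry] at hadd
  filter_upwards [hsol.forward, hsol.backward, hadd] with ω hf hb hkZ
  have hXT := hf T ⟨hT, le_rfl⟩
  have hY0 := hb 0 ⟨le_rfl, hT⟩
  simp only [integral_zero, I.integ_zero, Pi.zero_apply, add_zero, sub_zero] at hXT hY0
  rw [hY0, hXT, hσ, hkZ]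
  abel

/-- **Delarue's counterexample, case `k ≠ 0`.** The FBSDE `dX = (k+Z) dW`, `X₀ = x`,
`dY = Z dW`, `Y_T = X_T` (i.e. `b = 0`, `σ(z) = k + z`, `f = 0`, `g(x) = x(T)`, in
dimension `d = n = 1`) admits no solution of adapted square-integrable processes. -/
theorem delarue_no_solution
    {Ω : Type} [mΩ : MeasurableSpace Ω] (P : Measure Ω) [IsProbabilityMeasure P]
    (𝓕 : Filtration ℝ mΩ) {W : ℝ → Ω → Vec 1}
    (hW : IsBrownianMotion P 𝓕 W) (I : ItoIntegral P 𝓕 1 W)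
    (k : ℝ) (hk : k ≠ 0) (T : ℝ) (hT : 0 < T) (x₀ : ℝ) :
    ¬ ∃ (X : ℝ → Ω → Vec 1) (Y : ℝ → Ω → Vec 1) (Z : ℝ → Ω → Mat 1 1),
      IsSolution P 𝓕 I
        (fun _ _ _ _ _ => (0 : Vec 1))                 -- b = 0
        (fun _ _ _ _ z => fun i j => k + z i j)        -- σ = k + z
        (fun _ _ _ _ _ => (0 : Vec 1))                 -- f = 0
        0 T (fun _ _ => fun _ => x₀) (fun _ x => x T)  -- X₀ = x₀, Y_T = X_T
        X Y Z := by
  rintro ⟨X, Y, Z, hsol⟩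
  have hY := Y_zero_eq_of_delarue_solution hsol hT.le
  refine hW.not_ae_eq_of_measurable_zero hT 0 (G := fun ω => (Y 0 ω 0 - x₀) / k)
    (((measurable_pi_apply 0).comp (hsol.Y_adapted 0)).sub_const x₀ |>.div_const k) ?_
  filter_upwards [hY] with ω hω
  simp [hω, hk]
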